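/- Let Hank_n(ℂ) be the space of n×n complex Hankel matrices. Let μ_h be the structure tensor of the Hankel matrix-vector product β_h : Hank_n(ℂ) × ℂ^n → ℂ^n, (A, x) ↦ Ax, and let μ_H be the structure tensor of the Hankel matrix-Hankel matrix product β_H : Hank_n(ℂ) × Hank_n(ℂ) → ℂ^{n×n}, (A, B) ↦ AB. Then rank(μ_h) = brank(μ_h) = 2n − 1 and rank(μ_H) ≤ n(2n − 1). -/

import Mathlib

/-!
The Hankel matrix-vector product `(A x)_i = ∑_j a_{i+j} x_j` is a restriction of the cyclic
convolution on `ℤ/(2n-1)`, which the discrete Fourier transform turns into `2n - 1` pointwise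
products; hence rank `≤ 2n - 1`. Conversely, flattening the tensor against the Hankel basis and
one test position `(i, j)` per antidiagonal gives the identity matrix of size `2n - 1`. A
flattening of a tensor of rank `≤ r` factors through `𝕜^r`, so its determinant vanishes when
`r < 2n - 1`, and by continuity of the determinant this persists in the limit: the border rank is
`≥ 2n - 1`. Finally `A B` is assembled from the `n` Hankel matrix-vector products `A (B e_k)`.
-/

open Filter Topology

/-- `HasTensorRankLE 𝕜 β r` means that the bilinear operation `β` admits a decomposition
into `r` rank-one terms, i.e., the structure tensor `μ_β ∈ U* ⊗ V* ⊗ W` of `β` can be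
written as `∑ i, f i ⊗ g i ⊗ w i` with `r` summands; equivalently `rank (μ_β) ≤ r`. -/
def HasTensorRankLE (𝕜 : Type*) [Field 𝕜] {U V W : Type*}
    [AddCommGroup U] [Module 𝕜 U] [AddCommGroup V] [Module 𝕜 V]
    [AddCommGroup W] [Module 𝕜 W] (β : U → V → W) (r : ℕ) : Prop :=
  ∃ (f : Fin r → (U →ₗ[𝕜] 𝕜)) (g : Fin r → (V →ₗ[𝕜] 𝕜)) (w : Fin r → W),
    ∀ u v, β u v = ∑ i, (f i u * g i v) • w i

/-- The rank of the structure tensor `μ_β` of a bilinear operation `β`. -/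
noncomputable def tensorRank (𝕜 : Type*) [Field 𝕜] {U V W : Type*}
    [AddCommGroup U] [Module 𝕜 U] [AddCommGroup V] [Module 𝕜 V]
    [AddCommGroup W] [Module 𝕜 W] (β : U → V → W) : ℕ :=
  sInf {r | HasTensorRankLE 𝕜 β r}

/-- The border rank of the structure tensor `μ_β` of a bilinear operation `β` : the least `r`
such that `μ_β` is a limit of a sequence of tensors of rank at most `r` (convergence of the
tensors in the finite-dimensional space `U* ⊗ V* ⊗ W` being equivalent to pointwise
convergence of the corresponding bilinear maps). -/
noncomputable def borderRank (𝕜 : Type*) [Field 𝕜] {U V W : Type*}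
    [AddCommGroup U] [Module 𝕜 U] [AddCommGroup V] [Module 𝕜 V]
    [AddCommGroup W] [Module 𝕜 W] [TopologicalSpace W] (β : U → V → W) : ℕ :=
  sInf {r | ∃ s : ℕ → (U → V → W), (∀ m, HasTensorRankLE 𝕜 (s m) r) ∧
    ∀ u v, Tendsto (fun m => s m u v) atTop (𝓝 (β u v))}

/-- The space `Hank_n(ℂ)` of `n × n` complex Hankel matrices: matrices whose `(i,j)` entry
depends only on `i + j` (constant along antidiagonals). -/
noncomputable def hankelSpace (n : ℕ) : Submodule ℂ (Matrix (Fin n) (Fin n) ℂ) where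
  carrier := {A | ∀ i j k l : Fin n, (i : ℕ) + (j : ℕ) = (k : ℕ) + (l : ℕ) → A i j = A k l}
  add_mem' := by
    intro A B hA hB i j k l h
    simp [Matrix.add_apply, hA i j k l h, hB i j k l h]
  zero_mem' := by intro i j k l _; simp
  smul_mem' := by
    intro c A hA i j k l h
    simp [Matrix.smul_apply, hA i j k l h]


section TensorRank

variable {𝕜 U V W : Type*} [Field 𝕜] [AddCommGroup U] [Module 𝕜 U] [AddCommGroup V] [Module 𝕜 V]
  [AddCommGroup W] [Module 𝕜 W]

theorem HasTensorRankLE.of_fintype {ι : Type*} [Fintype ι] {β : U → V → W}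
    (f : ι → U →ₗ[𝕜] 𝕜) (g : ι → V →ₗ[𝕜] 𝕜) (w : ι → W)
    (hβ : ∀ u v, β u v = ∑ i, (f i u * g i v) • w i) :
    HasTensorRankLE 𝕜 β (Fintype.card ι) := by
  let e := (Fintype.equivFin ι).symm
  exact ⟨f ∘ e, g ∘ e, w ∘ e, fun u v => (hβ u v).trans (e.sum_comp _).symm⟩

theorem HasTensorRankLE.comp {U' V' W' : Type*} [AddCommGroup U'] [Module 𝕜 U']
    [AddCommGroup V'] [Module 𝕜 V'] [AddCommGroup W'] [Module 𝕜 W'] {β : U → V → W} {r : ℕ}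
    (h : HasTensorRankLE 𝕜 β r) (φ : U' →ₗ[𝕜] U) (ψ : V' →ₗ[𝕜] V) (χ : W →ₗ[𝕜] W') :
    HasTensorRankLE 𝕜 (fun u v => χ (β (φ u) (ψ v))) r := by
  obtain ⟨f, g, w, hβ⟩ := h
  exact ⟨fun i => (f i).comp φ, fun i => (g i).comp ψ, fun i => χ (w i),
    fun u v => by simp [hβ]⟩

theorem HasTensorRankLE.sum {ι : Type*} [Fintype ι] {β : ι → U → V → W} {r : ℕ}
    (h : ∀ i, HasTensorRankLE 𝕜 (β i) r) :
    HasTensorRankLE 𝕜 (fun u v => ∑ i, β i u v) (Fintype.card ι * r) := by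
  choose f g w hβ using h
  simpa using HasTensorRankLE.of_fintype (fun p : ι × Fin r => f p.1 p.2)
    (fun p => g p.1 p.2) (fun p => w p.1 p.2) fun u v => by simp [hβ, Fintype.sum_prod_type]

theorem tensorRank_le {β : U → V → W} {r : ℕ} (h : HasTensorRankLE 𝕜 β r) :
    tensorRank 𝕜 β ≤ r :=
  Nat.sInf_le h

theorem borderRank_le_tensorRank [TopologicalSpace W] {β : U → V → W} {r : ℕ}
    (h : HasTensorRankLE 𝕜 β r) : borderRank 𝕜 β ≤ tensorRank 𝕜 β :=
  Nat.sInf_le ⟨fun _ => β, fun _ => Nat.sInf_mem (s := {r | HasTensorRankLE 𝕜 β r}) ⟨r, h⟩,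
    fun _ _ => tendsto_const_nhds⟩

end TensorRank

section Flattening

variable {𝕜 U V κ σ τ : Type*} [Field 𝕜] [AddCommGroup U] [Module 𝕜 U] [AddCommGroup V]
  [Module 𝕜 V] [Fintype τ]

def flattening (β : U → V → κ → 𝕜) (u : τ → U) (v : σ → V) (c : σ → κ) : Matrix σ τ 𝕜 :=
  Matrix.of fun s t => β (u t) (v s) (c s)

theorem HasTensorRankLE.rank_flattening_le {β : U → V → κ → 𝕜} {r : ℕ}
    (h : HasTensorRankLE 𝕜 β r) (u : τ → U) (v : σ → V) (c : σ → κ) :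
    (flattening β u v c).rank ≤ r := by
  obtain ⟨f, g, w, hβ⟩ := h
  have hfac : flattening β u v c =
      Matrix.of (fun s i => g i (v s) * w i (c s)) * Matrix.of (fun i t => f i (u t)) := by
    ext s t
    simp [flattening, Matrix.mul_apply, hβ, mul_comm, mul_left_comm]
  rw [hfac]
  exact (Matrix.rank_mul_le_left _ _).trans
    ((Matrix.rank_le_card_width _).trans_eq (Fintype.card_fin r))

variable [TopologicalSpace 𝕜] [IsTopologicalRing 𝕜] [T2Space 𝕜] [Fintype σ] [DecidableEq σ]

theorem card_le_of_tendsto_of_det_flattening_ne_zero {β : U → V → κ → 𝕜}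
    {seq : ℕ → U → V → κ → 𝕜} {r : ℕ} (hseq : ∀ m, HasTensorRankLE 𝕜 (seq m) r)
    (hlim : ∀ u v, Tendsto (fun m => seq m u v) atTop (𝓝 (β u v)))
    (u : σ → U) (v : σ → V) (c : σ → κ) (hdet : (flattening β u v c).det ≠ 0) :
    Fintype.card σ ≤ r := by
  by_contra! hr
  have hzero (m : ℕ) : (flattening (seq m) u v c).det = 0 := by
    by_contra h
    exact ((hseq m).rank_flattening_le u v c).not_gt (Matrix.rank_of_det_ne_zero h ▸ hr)
  have hflat : Tendsto (fun m => flattening (seq m) u v c) atTop (𝓝 (flattening β u v c)) :=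
    tendsto_pi_nhds.2 fun s => tendsto_pi_nhds.2 fun t =>
      tendsto_pi_nhds.1 (hlim (u t) (v s)) (c s)
  refine hdet (tendsto_nhds_unique ((continuous_id.matrix_det.tendsto _).comp hflat) ?_)
  simp [Function.comp_def, hzero]

theorem le_borderRank_of_det_flattening_ne_zero {β : U → V → κ → 𝕜} {r : ℕ}
    (h : HasTensorRankLE 𝕜 β r) (u : σ → U) (v : σ → V) (c : σ → κ)
    (hdet : (flattening β u v c).det ≠ 0) : Fintype.card σ ≤ borderRank 𝕜 β :=
  le_csInf ⟨r, fun _ => β, fun _ => h, fun _ _ => tendsto_const_nhds⟩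
    fun _ ⟨_, hseq, hlim⟩ => card_le_of_tendsto_of_det_flattening_ne_zero hseq hlim u v c hdet

end Flattening

section CyclicConvolution

open ZMod

variable {N : ℕ} [NeZero N]

def cyclicConv (a b : ZMod N → ℂ) : ZMod N → ℂ :=
  fun i => ∑ t, a t * b (i - t)

theorem dft_cyclicConv (a b : ZMod N → ℂ) : 𝓕 (cyclicConv a b) = 𝓕 a * 𝓕 b := by
  ext k
  have hshift (t : ZMod N) :
      ∑ i, stdAddChar (-(i * k)) * b (i - t) = stdAddChar (-(t * k)) * 𝓕 b k := by
    rw [dft_apply, Finset.mul_sum]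
    refine Fintype.sum_equiv (Equiv.subRight t) _ _ fun i => ?_
    rw [Equiv.subRight_apply, smul_eq_mul, ← mul_assoc, ← AddChar.map_add_eq_mul]
    ring_nf
  calc 𝓕 (cyclicConv a b) k = ∑ t, a t * ∑ i, stdAddChar (-(i * k)) * b (i - t) := by
        simp only [dft_apply, cyclicConv, smul_eq_mul, Finset.mul_sum]
        rw [Finset.sum_comm]
        simp only [mul_left_comm]
    _ = ∑ t, stdAddChar (-(t * k)) * a t * 𝓕 b k := by
        simp only [hshift, mul_left_comm, mul_assoc]
    _ = (𝓕 a * 𝓕 b) k := by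
        simp only [Pi.mul_apply, dft_apply, smul_eq_mul, Finset.sum_mul]

theorem hasTensorRankLE_cyclicConv : HasTensorRankLE ℂ (cyclicConv (N := N)) N := by
  have hcard := HasTensorRankLE.of_fintype (β := cyclicConv (N := N))
    (fun k => (LinearMap.proj k).comp (𝓕 : (ZMod N → ℂ) ≃ₗ[ℂ] _).toLinearMap)
    (fun k => (LinearMap.proj k).comp (𝓕 : (ZMod N → ℂ) ≃ₗ[ℂ] _).toLinearMap)
    (fun k i => (N : ℂ)⁻¹ * stdAddChar (k * i)) fun a b => by
      ext i
      rw [← (𝓕 : (ZMod N → ℂ) ≃ₗ[ℂ] _).symm_apply_apply (cyclicConv a b), dft_cyclicConv,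
        invDFT_apply]
      simp [Finset.mul_sum, mul_comm, mul_assoc]
  rwa [ZMod.card] at hcard

end CyclicConvolution

open Matrix

theorem hasTensorRankLE_mul_of_mulVec {𝕜 l m p : Type*} [Field 𝕜] [Fintype m] [Fintype p]
    [DecidableEq p] {S : Submodule 𝕜 (Matrix l m 𝕜)} (T : Submodule 𝕜 (Matrix m p 𝕜)) {r : ℕ}
    (h : HasTensorRankLE 𝕜 (fun (A : S) (x : m → 𝕜) => (A : Matrix l m 𝕜) *ᵥ x) r) :
    HasTensorRankLE 𝕜 (fun (A : S) (B : T) => (A : Matrix l m 𝕜) * (B : Matrix m p 𝕜))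
      (Fintype.card p * r) := by
  let column (k : p) : T →ₗ[𝕜] (m → 𝕜) :=
    { toFun := fun B j => (B : Matrix m p 𝕜) j k
      map_add' := fun _ _ => rfl
      map_smul' := fun _ _ => rfl }
  let toColumn (k : p) : (l → 𝕜) →ₗ[𝕜] Matrix l p 𝕜 :=
    { toFun := fun v => Matrix.of fun i j => if j = k then v i else 0
      map_add' := fun _ _ => by ext i j; by_cases j = k <;> simp [*]
      map_smul' := fun _ _ => by ext i j; by_cases j = k <;> simp [*] }
  have hcols : (fun (A : S) (B : T) => (A : Matrix l m 𝕜) * (B : Matrix m p 𝕜)) =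
      fun (A : S) B => ∑ k, toColumn k ((A : Matrix l m 𝕜) *ᵥ column k B) := by
    ext A B i j
    simp only [toColumn, LinearMap.coe_mk, AddHom.coe_mk, Matrix.sum_apply, of_apply, mul_apply,
      mulVec, dotProduct, Finset.sum_ite_eq, Finset.mem_univ, if_true]
    rfl
  rw [hcols]
  exact HasTensorRankLE.sum fun k => h.comp LinearMap.id (column k) (toColumn k)

section Hankel

variable {n : ℕ}

/-- `(antidiagRow s, antidiagCol s)` is a chosen position on the `s`-th antidiagonal. -/
def antidiagRow (s : Fin (2 * n - 1)) : Fin n :=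
  ⟨s - min (s : ℕ) (n - 1), by omega⟩

def antidiagCol (s : Fin (2 * n - 1)) : Fin n :=
  ⟨min (s : ℕ) (n - 1), by omega⟩

theorem antidiagRow_add_antidiagCol (s : Fin (2 * n - 1)) :
    (antidiagRow s : ℕ) + antidiagCol s = s := by
  simp only [antidiagRow, antidiagCol]
  omega

def hankelBasis (t : Fin (2 * n - 1)) : hankelSpace n :=
  ⟨Matrix.of fun i j => if (i : ℕ) + j = t then 1 else 0,
    fun i j k l h => by simp only [Matrix.of_apply, h]⟩

theorem flattening_hankel_mulVec :
    flattening (fun (A : hankelSpace n) x => (A : Matrix (Fin n) (Fin n) ℂ) *ᵥ x) hankelBasis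
      (fun s => Pi.single (antidiagCol s) 1) antidiagRow = 1 := by
  ext s t
  simp [flattening, hankelBasis, antidiagRow_add_antidiagCol, Matrix.one_apply, Fin.ext_iff,
    eq_comm]

section Cyclic

variable [NeZero (2 * n - 1)]

/-- The antidiagonal values `a_s` of a Hankel matrix, read cyclically: since `i + j < 2n - 1` for
`i, j < n`, no two antidiagonals are identified. -/
def hankelSeq : hankelSpace n →ₗ[ℂ] (ZMod (2 * n - 1) → ℂ) where
  toFun A t := (A : Matrix (Fin n) (Fin n) ℂ) (antidiagRow ⟨t.val, t.val_lt⟩)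
    (antidiagCol ⟨t.val, t.val_lt⟩)
  map_add' _ _ := rfl
  map_smul' _ _ := rfl

theorem hankelSeq_apply_natCast_add (A : hankelSpace n) (i j : Fin n) :
    hankelSeq A (((i : ℕ) + j : ℕ) : ZMod (2 * n - 1)) = (A : Matrix (Fin n) (Fin n) ℂ) i j :=
  A.2 _ _ _ _ (by rw [antidiagRow_add_antidiagCol]; exact ZMod.val_cast_of_lt (by omega))

/-- `x ↦ x̃` with `x̃ (-j) = x j`, so that `cyclicConv a x̃ i = ∑ j, a (i + j) * x j`. -/
def reflectEmbedding : (Fin n → ℂ) →ₗ[ℂ] (ZMod (2 * n - 1) → ℂ) :=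
  (Matrix.of fun t (j : Fin n) => if t = -((j : ℕ) : ZMod (2 * n - 1)) then 1 else 0).mulVecLin

theorem hankel_mulVec_eq_cyclicConv (A : hankelSpace n) (x : Fin n → ℂ) (i : Fin n) :
    ((A : Matrix (Fin n) (Fin n) ℂ) *ᵥ x) i =
      cyclicConv (hankelSeq A) (reflectEmbedding x) ((i : ℕ) : ZMod (2 * n - 1)) := by
  simp only [cyclicConv, reflectEmbedding, Matrix.mulVecLin_apply, Matrix.mulVec, dotProduct,
    Matrix.of_apply, Finset.mul_sum]
  rw [Finset.sum_comm]
  refine Finset.sum_congr rfl fun j _ => ?_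
  have hcond (t : ZMod (2 * n - 1)) :
      ((i : ℕ) : ZMod (2 * n - 1)) - t = -((j : ℕ) : ZMod (2 * n - 1)) ↔
        t = (((i : ℕ) + j : ℕ) : ZMod (2 * n - 1)) := by
    push_cast
    constructor <;> intro h <;> linear_combination -h
  simp only [hcond, ite_mul, one_mul, zero_mul, mul_ite, mul_zero, Finset.sum_ite_eq',
    Finset.mem_univ, if_true, hankelSeq_apply_natCast_add]

end Cyclic

theorem hasTensorRankLE_hankel_mulVec (n : ℕ) :
    HasTensorRankLE ℂ (fun (A : hankelSpace n) x => (A : Matrix (Fin n) (Fin n) ℂ) *ᵥ x)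
      (2 * n - 1) := by
  -- for `n = 0` the modulus `2 * n - 1` truncates to `0`, and `ZMod 0 = ℤ`
  rcases Nat.eq_zero_or_pos n with rfl | hn
  · exact ⟨Fin.elim0, Fin.elim0, Fin.elim0, fun _ _ => Subsingleton.elim _ _⟩
  have : NeZero (2 * n - 1) := ⟨by omega⟩
  let restrict := LinearMap.funLeft ℂ ℂ fun i : Fin n => ((i : ℕ) : ZMod (2 * n - 1))
  have hconv : (fun (A : hankelSpace n) x => (A : Matrix (Fin n) (Fin n) ℂ) *ᵥ x) =
      fun A x => restrict (cyclicConv (hankelSeq A) (reflectEmbedding x)) := by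
    ext A x i
    exact hankel_mulVec_eq_cyclicConv A x i
  rw [hconv]
  exact hasTensorRankLE_cyclicConv.comp hankelSeq reflectEmbedding restrict

end Hankel

/-- The structure tensor `μ_h` of the Hankel matrix-vector product
`Hank_n(ℂ) × ℂ^n → ℂ^n` has rank and border rank `2n − 1`, and the structure tensor `μ_H` of
the Hankel matrix-Hankel matrix product `Hank_n(ℂ) × Hank_n(ℂ) → ℂ^{n×n}` has rank at most
`n(2n − 1)`. -/
theorem tensorRank_hankel (n : ℕ) :
    tensorRank ℂ (fun (A : hankelSpace n) (x : Fin n → ℂ) =>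
        (A : Matrix (Fin n) (Fin n) ℂ).mulVec x) = 2 * n - 1 ∧
    borderRank ℂ (fun (A : hankelSpace n) (x : Fin n → ℂ) =>
        (A : Matrix (Fin n) (Fin n) ℂ).mulVec x) = 2 * n - 1 ∧
    tensorRank ℂ (fun (A B : hankelSpace n) =>
        (A : Matrix (Fin n) (Fin n) ℂ) * (B : Matrix (Fin n) (Fin n) ℂ)) ≤ n * (2 * n - 1) := by
  have hup := hasTensorRankLE_hankel_mulVec n
  have hlow : 2 * n - 1 ≤ borderRank ℂ (fun (A : hankelSpace n) (x : Fin n → ℂ) =>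
      (A : Matrix (Fin n) (Fin n) ℂ) *ᵥ x) := by
    have hdet := le_borderRank_of_det_flattening_ne_zero hup hankelBasis _ antidiagRow
      (by rw [flattening_hankel_mulVec, Matrix.det_one]; exact one_ne_zero)
    rwa [Fintype.card_fin] at hdet
  refine ⟨le_antisymm (tensorRank_le hup) (hlow.trans (borderRank_le_tensorRank hup)),
    le_antisymm ((borderRank_le_tensorRank hup).trans (tensorRank_le hup)) hlow, ?_⟩
  simpa using tensorRank_le (hasTensorRankLE_mul_of_mulVec (hankelSpace n) hup)
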